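/- Let $r>0$, $\beta\in(0,r)$, $m\ge 1$, and let $V:\mathbb{R}^d\to\mathbb{R}^{m\times m}$ have entries $v_{ij}(x)=g_{ij}(x)(1+|x|^2)^{\beta_{ij}}$ for $i\ne j$ and $v_{ii}(x)=(1+|x|^2)^r+g_i(x)(1+|x|^2)^{\beta_i}$, where all $g_i,g_{ij}$ are bounded with $\mathfrak{g}=\max\{\|g_i\|_\infty,\|g_{ij}\|_\infty\}$ and all $\beta_i,\beta_{ij}\le\beta<r$. Then there exists $k>0$ such that for all $x$ with $|x|\ge k$ and all $\eta\in\mathbb{R}^m$, $|V(x)\eta|^2\ge \tfrac{1}{8}(1+|x|^2)^{2r}|\eta|^2$. -/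
import Mathlib


set_option maxHeartbeats 1000000 in
/-- lower bound `|V(x)η|² ≥ (1/8)(1+|x|²)^{2r}|η|²` for `|x|` large, for the
potential matrix of Example 5.2. -/
theorem stmt8 {d m : ℕ} (r β G : ℝ) (hr : 0 < r) (hβ : 0 < β) (hβr : β < r) (hG : 0 ≤ G)
    (V : EuclideanSpace ℝ (Fin d) → Matrix (Fin m) (Fin m) ℝ)
    (g : Fin m → EuclideanSpace ℝ (Fin d) → ℝ)
    (g' : Fin m → Fin m → EuclideanSpace ℝ (Fin d) → ℝ)
    (βd : Fin m → ℝ) (βo : Fin m → Fin m → ℝ)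
    (hβd : ∀ i, 0 < βd i ∧ βd i ≤ β) (hβo : ∀ i j, 0 < βo i j ∧ βo i j ≤ β)
    (hgb : ∀ i x, |g i x| ≤ G) (hg'b : ∀ i j x, |g' i j x| ≤ G)
    (hdiag : ∀ x i, V x i i = (1 + ‖x‖ ^ 2) ^ r + g i x * (1 + ‖x‖ ^ 2) ^ (βd i))
    (hoff : ∀ x i j, i ≠ j → V x i j = g' i j x * (1 + ‖x‖ ^ 2) ^ (βo i j)) :
    ∃ k : ℝ, 0 < k ∧ ∀ x, k ≤ ‖x‖ → ∀ η : Fin m → ℝ,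
      (1 / 8) * (1 + ‖x‖ ^ 2) ^ (2 * r) * ∑ i, η i ^ 2 ≤ ∑ i, ((V x).mulVec η i) ^ 2 := by
  classical
  set C : ℝ := 4 * (m + 1) * G + 1 with hCdef
  have hC1 : 1 ≤ C := by
    have : (0:ℝ) ≤ 4 * (m + 1) * G := by positivity
    linarith
  have hrβ : 0 < r - β := by linarith
  refine ⟨C ^ (1 / (r - β)), by positivity, ?_⟩
  intro x hk η
  set s : ℝ := 1 + ‖x‖ ^ 2 with hsdef
  have hs1 : 1 ≤ s := by nlinarith [sq_nonneg ‖x‖]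
  have hs0 : (0:ℝ) < s := by linarith
  have hks : C ^ (1 / (r - β)) ≤ s := by
    have h1 : ‖x‖ ≤ s := by nlinarith [sq_nonneg (‖x‖ - 1)]
    linarith
  have hCs : C ≤ s ^ (r - β) := by
    calc C = (C ^ (1 / (r - β))) ^ (r - β) := by
          rw [one_div, Real.rpow_inv_rpow (by linarith) hrβ.ne']
      _ ≤ s ^ (r - β) := Real.rpow_le_rpow (Real.rpow_nonneg (by linarith) _) hks hrβ.le
  have hsr0 : (0:ℝ) ≤ s ^ r := Real.rpow_nonneg hs0.le r
  have hsβ0 : (0:ℝ) ≤ s ^ β := Real.rpow_nonneg hs0.le β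
  have hsplit : s ^ (r - β) * s ^ β = s ^ r := by
    rw [← Real.rpow_add hs0]; ring_nf
  -- key smallness bounds
  have hmG : (m : ℝ) * G * s ^ β ≤ (1/4) * s ^ r := by
    have h1 : 4 * (m : ℝ) * G ≤ s ^ (r - β) := by
      have : 4 * (m : ℝ) * G ≤ 4 * ((m : ℝ) + 1) * G := by nlinarith
      linarith
    nlinarith [mul_le_mul_of_nonneg_right h1 hsβ0]
  have hGs : G * s ^ β ≤ (1/4) * s ^ r := by
    have h1 : 4 * G ≤ s ^ (r - β) := by
      have : 4 * G ≤ 4 * ((m : ℝ) + 1) * G := by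
        have : (0:ℝ) ≤ (m : ℝ) := Nat.cast_nonneg m
        nlinarith
      linarith
    nlinarith [mul_le_mul_of_nonneg_right h1 hsβ0]
  -- diagonal lower bound
  have hdiagB : ∀ i, (3/4) * s ^ r ≤ V x i i := by
    intro i
    rw [hdiag x i]
    have h1 : |g i x * s ^ βd i| ≤ G * s ^ β := by
      rw [abs_mul]
      exact mul_le_mul (hgb i x)
        (by rw [abs_of_nonneg (Real.rpow_nonneg hs0.le _)];
            exact Real.rpow_le_rpow_of_exponent_le hs1 (hβd i).2)
        (abs_nonneg _) hG
    have h2 := neg_abs_le (g i x * s ^ βd i)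
    linarith
  -- off-diagonal upper bound
  have hoffB : ∀ i j, i ≠ j → |V x i j| ≤ G * s ^ β := by
    intro i j hij
    rw [hoff x i j hij, abs_mul]
    exact mul_le_mul (hg'b i j x)
      (by rw [abs_of_nonneg (Real.rpow_nonneg hs0.le _)];
          exact Real.rpow_le_rpow_of_exponent_le hs1 (hβo i j).2)
      (abs_nonneg _) hG
  set S : ℝ := ∑ i, η i ^ 2 with hSdef
  have hS0 : 0 ≤ S := Finset.sum_nonneg fun i _ => sq_nonneg _
  -- per-row estimate
  have hrow : ∀ i, 9/32 * (s ^ r) ^ 2 * η i ^ 2 - (m : ℝ) * (G * s ^ β) ^ 2 * S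
      ≤ ((V x).mulVec η i) ^ 2 := by
    intro i
    set a : ℝ := V x i i * η i with ha
    set b : ℝ := ∑ j ∈ Finset.univ.erase i, V x i j * η j with hb
    have hab : (V x).mulVec η i = a + b := by
      rw [ha, hb]
      simp only [Matrix.mulVec, dotProduct]
      exact (Finset.add_sum_erase _ _ (Finset.mem_univ i)).symm
    have haB : (3/4 * s ^ r) ^ 2 * η i ^ 2 ≤ a ^ 2 := by
      have h1 := hdiagB i
      have h2 : (3/4 * s ^ r) ^ 2 ≤ (V x i i) ^ 2 := by nlinarith
      have : a ^ 2 = (V x i i) ^ 2 * η i ^ 2 := by rw [ha]; ring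
      rw [this]
      exact mul_le_mul_of_nonneg_right h2 (sq_nonneg _)
    have hbB : b ^ 2 ≤ (m : ℝ) * (G * s ^ β) ^ 2 * S := by
      have hc := Finset.sum_mul_sq_le_sq_mul_sq (Finset.univ.erase i)
        (fun j => V x i j) (fun j => η j)
      have h1 : ∑ j ∈ Finset.univ.erase i, (V x i j) ^ 2
          ≤ (m : ℝ) * (G * s ^ β) ^ 2 := by
        calc ∑ j ∈ Finset.univ.erase i, (V x i j) ^ 2
            ≤ ∑ _j ∈ Finset.univ.erase i, (G * s ^ β) ^ 2 := by
              refine Finset.sum_le_sum fun j hj => ?_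
              have hij : i ≠ j := (Finset.ne_of_mem_erase hj).symm
              have := hoffB i j hij
              nlinarith [abs_nonneg (V x i j), sq_abs (V x i j)]
          _ = ((Finset.univ.erase i).card : ℝ) * (G * s ^ β) ^ 2 := by
              rw [Finset.sum_const, nsmul_eq_mul]
          _ ≤ (m : ℝ) * (G * s ^ β) ^ 2 := by
              refine mul_le_mul_of_nonneg_right ?_ (by positivity)
              have : (Finset.univ.erase i).card ≤ m := by
                simpa using (Finset.card_erase_le.trans (by simp))
              exact_mod_cast this
      have h2 : ∑ j ∈ Finset.univ.erase i, (η j) ^ 2 ≤ S := by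
        rw [hSdef]
        exact Finset.sum_le_sum_of_subset_of_nonneg (Finset.erase_subset _ _)
          (fun j _ _ => sq_nonneg _)
      calc b ^ 2 ≤ (∑ j ∈ Finset.univ.erase i, (V x i j) ^ 2) *
            ∑ j ∈ Finset.univ.erase i, (η j) ^ 2 := hc
        _ ≤ (m : ℝ) * (G * s ^ β) ^ 2 * S := by
            apply mul_le_mul h1 h2 (Finset.sum_nonneg fun j _ => sq_nonneg _)
            positivity
    rw [hab]
    nlinarith [sq_nonneg (a + 2 * b)]
  have hsum : ∑ i, (9/32 * (s ^ r) ^ 2 * η i ^ 2 - (m : ℝ) * (G * s ^ β) ^ 2 * S)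
      ≤ ∑ i, ((V x).mulVec η i) ^ 2 := Finset.sum_le_sum fun i _ => hrow i
  have hsum2 : ∑ i, (9/32 * (s ^ r) ^ 2 * η i ^ 2 - (m : ℝ) * (G * s ^ β) ^ 2 * S)
      = 9/32 * (s ^ r) ^ 2 * S - (m : ℝ) ^ 2 * (G * s ^ β) ^ 2 * S := by
    rw [Finset.sum_sub_distrib, ← Finset.mul_sum, Finset.sum_const, nsmul_eq_mul]
    simp [hSdef]; ring
  have h2r : s ^ (2 * r) = (s ^ r) ^ 2 := by
    rw [two_mul, Real.rpow_add hs0, sq]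
  rw [h2r]
  have hfin : ((m : ℝ) * (G * s ^ β)) ^ 2 ≤ ((1/4) * s ^ r) ^ 2 := by
    have h1 : (m : ℝ) * (G * s ^ β) ≤ (1/4) * s ^ r := by
      have := hmG; linarith [mul_assoc (m:ℝ) G (s ^ β)]
    have h0 : 0 ≤ (m : ℝ) * (G * s ^ β) := by positivity
    nlinarith
  rw [hsum2] at hsum
  nlinarith [mul_le_mul_of_nonneg_right hfin hS0, hS0, hsum]
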